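/- Fix α > 0 and β ∈ (0,1/2), and let 1/z_n = 1 + α n^{-β}. Then α L_n/n^β converges in distribution to an exponential random variable of mean 1: for every y ≥ 0, P_{n,z_n}(L_n > y n^β/α) → e^{-y}. -/

import Mathlib

/-!
`K_n` has `(n - 1)_k` self-avoiding walks of length `k` from `0`, so the weight of length `k` is
`z ^ k ∏_{i ≤ k} (1 - i / n)`, which lies between `z ^ k (1 - k ^ 2 / n)` and `z ^ k`. Summing, both
the tail sum and the partition function are geometric sums up to an error `2 / (n (1 - z) ^ 3)`,
and the tail `P(L_n > x)` lies between `z ^ m - δ` and `z ^ m / (1 - δ)`, where `m = ⌊x⌋ + 1` and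
`δ = z ^ n + 2 / (n (1 - z) ^ 2)`. For `1 / z_n = 1 + α n ^ (-β)` one has
`n (1 - z_n) ^ 2 ~ α ^ 2 n ^ (1 - 2β) → ∞` precisely because `β < 1 / 2`, so `δ → 0`, while
`z_n ^ m = (1 + α n ^ (-β)) ^ (-m) → e ^ (-y)` for `m ~ y n ^ β / α`.
-/

open Filter Finset Real

/-- Number of `k`-step SAWs weight: `(z/n)^k` times the number of walks. -/
noncomputable def sawWeight (n : ℕ) (z : ℝ) (k : ℕ) : ℝ :=
  (z / n) ^ k * ((n - 1).descFactorial k)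

/-- Partition function of the variable-length SAW model on `K_n`. -/
noncomputable def sawZ (n : ℕ) (z : ℝ) : ℝ := ∑ k ∈ Finset.range n, sawWeight n z k

/-- Probability that the walk length equals `k`. -/
noncomputable def sawProb (n : ℕ) (z : ℝ) (k : ℕ) : ℝ := sawWeight n z k / sawZ n z

/-- Mean walk length. -/
noncomputable def sawMean (n : ℕ) (z : ℝ) : ℝ := ∑ k ∈ Finset.range n, (k : ℝ) * sawProb n z k

/-- Variance of the walk length. -/
noncomputable def sawVar (n : ℕ) (z : ℝ) : ℝ :=
  (∑ k ∈ Finset.range n, (k : ℝ) ^ 2 * sawProb n z k) - (sawMean n z) ^ 2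

/-- Tail distribution `P(L_n > x)` for real `x`. -/
noncomputable def sawTail (n : ℕ) (z : ℝ) (x : ℝ) : ℝ :=
  ∑ k ∈ Finset.range n, if x < (k : ℝ) then sawProb n z k else 0

/-- Regularised incomplete gamma function at integer first argument,
    `Q(n, ν) = e^{-ν} ∑_{j<n} ν^j/j!`. -/
noncomputable def Qreg (n : ℕ) (ν : ℝ) : ℝ :=
  Real.exp (-ν) * ∑ j ∈ Finset.range n, ν ^ j / (Nat.factorial j)

/-- `H_n(ν) = Γ(n) Q(n,ν) / (ν^n e^{-ν})`. -/
noncomputable def Hfun (n : ℕ) (ν : ℝ) : ℝ :=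
  Real.Gamma n * Qreg n ν / (ν ^ n * Real.exp (-ν))

/-- Standard normal density. -/
noncomputable def normpdf (x : ℝ) : ℝ := Real.exp (-x ^ 2 / 2) / Real.sqrt (2 * Real.pi)

/-- Standard normal tail distribution `Φ̄`. -/
noncomputable def normTail (x : ℝ) : ℝ := ∫ t in Set.Ioi x, normpdf t

/-- `η(λ) = sgn(λ-1) √(2(λ-1-log λ))`. -/
noncomputable def etaF (l : ℝ) : ℝ := Real.sign (l - 1) * Real.sqrt (2 * (l - 1 - Real.log l))

/-- `Γ*(n) = √(n/(2π)) e^n n^{-n} Γ(n)`. -/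
noncomputable def gammaStar (n : ℕ) : ℝ :=
  Real.sqrt (n / (2 * Real.pi)) * Real.exp n * ((n : ℝ) ^ n)⁻¹ * Real.Gamma n

/-- The operator `(ν d/dν)^l`. -/
noncomputable def thetaOp : ℕ → (ℝ → ℝ) → (ℝ → ℝ)
  | 0, f => f
  | (l + 1), f => fun ν => ν * deriv (thetaOp l f) ν

open Topology

lemma sawWeight_nonneg {z : ℝ} (hz : 0 ≤ z) (n k : ℕ) : 0 ≤ sawWeight n z k := by
  unfold sawWeight; positivity

lemma sawWeight_le_pow {z : ℝ} (hz : 0 ≤ z) (n k : ℕ) : sawWeight n z k ≤ z ^ k := by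
  have hdesc : ((n - 1).descFactorial k : ℝ) ≤ (n : ℝ) ^ k := by
    exact_mod_cast (Nat.descFactorial_le_pow _ _).trans (Nat.pow_le_pow_left (Nat.sub_le n 1) k)
  have hcancel : z / n * n ≤ z := by
    rcases n.eq_zero_or_pos with rfl | hn
    · simpa using hz
    · rw [div_mul_cancel₀ _ (by positivity)]
  calc sawWeight n z k ≤ (z / n) ^ k * (n : ℝ) ^ k := by unfold sawWeight; gcongr
    _ = (z / n * n) ^ k := (mul_pow _ _ _).symm
    _ ≤ z ^ k := by gcongr

lemma pow_sub_sq_mul_pow_div_le_sawWeight {z : ℝ} (hz : 0 ≤ z) {n k : ℕ} (hkn : k ≤ n) :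
    z ^ k - k ^ 2 * z ^ k / n ≤ sawWeight n z k := by
  rcases n.eq_zero_or_pos with rfl | hn
  · obtain rfl : k = 0 := by omega
    simp [sawWeight]
  have hn' : (0 : ℝ) < n := by exact_mod_cast hn
  have hkn' : (k : ℝ) ≤ n := by exact_mod_cast hkn
  have hdesc : (((n - k : ℕ) : ℝ)) ^ k ≤ (n - 1).descFactorial k := by
    have := Nat.pow_sub_le_descFactorial (n - 1) k
    rw [Nat.sub_add_cancel hn] at this
    exact_mod_cast this
  have hbern : -2 ≤ -(k / n : ℝ) := by
    have : (k / n : ℝ) ≤ 1 := (div_le_one hn').2 hkn'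
    linarith
  calc z ^ k - k ^ 2 * z ^ k / n = z ^ k * (1 + k * -(k / n : ℝ)) := by ring
    _ ≤ z ^ k * (1 + -(k / n : ℝ)) ^ k := by gcongr; exact one_add_mul_le_pow hbern k
    _ = (z / n) ^ k * (((n - k : ℕ) : ℝ)) ^ k := by
        rw [Nat.cast_sub hkn, ← mul_pow, ← mul_pow]; congr 1; field_simp; ring
    _ ≤ sawWeight n z k := by unfold sawWeight; gcongr

lemma sum_sq_mul_pow_le {r : ℝ} (h0 : 0 ≤ r) (h1 : r < 1) (s : Finset ℕ) :
    ∑ k ∈ s, (k : ℝ) ^ 2 * r ^ k ≤ 2 / (1 - r) ^ 3 := by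
  have hs := hasSum_choose_mul_geometric_of_norm_lt_one (𝕜 := ℝ) 2
    (by rwa [Real.norm_eq_abs, abs_of_nonneg h0])
  have hterm (k : ℕ) : (k : ℝ) ^ 2 * r ^ k ≤ 2 * (((k + 2).choose 2 : ℕ) * r ^ k) := by
    rw [Nat.cast_choose_two]; push_cast
    nlinarith [mul_nonneg (Nat.cast_nonneg (α := ℝ) k) (pow_nonneg h0 k), pow_nonneg h0 k]
  calc ∑ k ∈ s, (k : ℝ) ^ 2 * r ^ k
      ≤ 2 * ∑ k ∈ s, ((k + 2).choose 2 : ℕ) * r ^ k := by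
        rw [mul_sum]; exact sum_le_sum fun k _ => hterm k
    _ ≤ 2 * (1 / (1 - r) ^ (2 + 1)) := by
        gcongr
        exact (hs.summable.sum_le_tsum s fun k _ => by positivity).trans_eq hs.tsum_eq
    _ = 2 / (1 - r) ^ 3 := by ring

lemma sub_div_le_geom_sum_Ico {r : ℝ} (h0 : 0 ≤ r) (h1 : r < 1) (m n : ℕ) :
    (r ^ m - r ^ n) / (1 - r) ≤ ∑ k ∈ Ico m n, r ^ k := by
  rcases le_or_gt m n with hmn | hnm
  · rw [geom_sum_Ico' h1.ne hmn]
  · rw [Ico_eq_empty_of_le hnm.le, sum_empty]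
    exact div_nonpos_of_nonpos_of_nonneg (sub_nonpos.2 (pow_le_pow_of_le_one h0 h1.le hnm.le))
      (sub_nonneg.2 h1.le)

lemma sum_sawWeight_Ico_le {r : ℝ} (h0 : 0 ≤ r) (h1 : r < 1) (m n : ℕ) :
    ∑ k ∈ Ico m n, sawWeight n r k ≤ r ^ m / (1 - r) :=
  (sum_le_sum fun k _ => sawWeight_le_pow h0 n k).trans (geom_sum_Ico_le_of_lt_one h0 h1)

lemma le_sum_sawWeight_Ico {r : ℝ} (h0 : 0 ≤ r) (h1 : r < 1) (m n : ℕ) :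
    (r ^ m - r ^ n) / (1 - r) - 2 / (n * (1 - r) ^ 3) ≤ ∑ k ∈ Ico m n, sawWeight n r k := by
  have hquad : (∑ k ∈ Ico m n, (k : ℝ) ^ 2 * r ^ k) / n ≤ 2 / (n * (1 - r) ^ 3) := by
    rw [mul_comm, ← div_div]; gcongr; exact sum_sq_mul_pow_le h0 h1 _
  calc (r ^ m - r ^ n) / (1 - r) - 2 / (n * (1 - r) ^ 3)
      ≤ ∑ k ∈ Ico m n, r ^ k - (∑ k ∈ Ico m n, (k : ℝ) ^ 2 * r ^ k) / n := by
        linarith [sub_div_le_geom_sum_Ico h0 h1 m n]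
    _ = ∑ k ∈ Ico m n, (r ^ k - (k : ℝ) ^ 2 * r ^ k / n) := by
        rw [sum_sub_distrib, sum_div]
    _ ≤ ∑ k ∈ Ico m n, sawWeight n r k :=
        sum_le_sum fun k hk => pow_sub_sq_mul_pow_div_le_sawWeight h0 (mem_Ico.1 hk).2.le

lemma sawTail_eq_sum_Ico_div {x : ℝ} (hx : 0 ≤ x) (n : ℕ) (z : ℝ) :
    sawTail n z x = (∑ k ∈ Ico (⌊x⌋₊ + 1) n, sawWeight n z k) / sawZ n z := by
  have hfilter : (range n).filter (fun k : ℕ => x < k) = Ico (⌊x⌋₊ + 1) n := by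
    ext k; simp [Nat.floor_lt hx, and_comm]
  rw [sawTail, ← sum_filter, hfilter, sum_div]
  rfl

lemma one_le_sawZ {z : ℝ} (hz : 0 ≤ z) {n : ℕ} (hn : 0 < n) : 1 ≤ sawZ n z := by
  have : sawWeight n z 0 ≤ sawZ n z :=
    single_le_sum (fun k _ => sawWeight_nonneg hz n k) (mem_range.2 hn)
  simpa [sawWeight] using this

lemma pow_sub_le_sawTail {r x : ℝ} (h0 : 0 ≤ r) (h1 : r < 1) {n : ℕ} (hn : 0 < n) (hx : 0 ≤ x) :
    r ^ (⌊x⌋₊ + 1) - (r ^ n + 2 / (n * (1 - r) ^ 2)) ≤ sawTail n r x := by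
  set T := ∑ k ∈ Ico (⌊x⌋₊ + 1) n, sawWeight n r k
  have h1r : 0 < 1 - r := sub_pos.2 h1
  have hZ : sawZ n r ≤ 1 / (1 - r) := by
    have := sum_sawWeight_Ico_le h0 h1 0 n
    rwa [pow_zero, ← range_eq_Ico] at this
  calc r ^ (⌊x⌋₊ + 1) - (r ^ n + 2 / (n * (1 - r) ^ 2))
      = ((r ^ (⌊x⌋₊ + 1) - r ^ n) / (1 - r) - 2 / (n * (1 - r) ^ 3)) * (1 - r) := by
        field_simp; ring
    _ ≤ T * (1 - r) := by gcongr; exact le_sum_sawWeight_Ico h0 h1 _ n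
    _ = T / (1 / (1 - r)) := by rw [div_div_eq_mul_div, div_one]
    _ ≤ T / sawZ n r := by
        gcongr
        · exact sum_nonneg fun k _ => sawWeight_nonneg h0 n k
        · exact one_pos.trans_le (one_le_sawZ h0 hn)
    _ = sawTail n r x := (sawTail_eq_sum_Ico_div hx n r).symm

lemma sawTail_le_pow_div {r x : ℝ} (h0 : 0 ≤ r) (h1 : r < 1) {n : ℕ} (hx : 0 ≤ x)
    (hδ : r ^ n + 2 / (n * (1 - r) ^ 2) < 1) :
    sawTail n r x ≤ r ^ (⌊x⌋₊ + 1) / (1 - (r ^ n + 2 / (n * (1 - r) ^ 2))) := by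
  have h1r : 0 < 1 - r := sub_pos.2 h1
  have hZ : (1 - (r ^ n + 2 / (n * (1 - r) ^ 2))) / (1 - r) ≤ sawZ n r := by
    have := le_sum_sawWeight_Ico h0 h1 0 n
    rw [pow_zero, ← range_eq_Ico, ← sawZ] at this
    convert this using 1
    field_simp; ring
  rw [sawTail_eq_sum_Ico_div hx]
  calc (∑ k ∈ Ico (⌊x⌋₊ + 1) n, sawWeight n r k) / sawZ n r
      ≤ r ^ (⌊x⌋₊ + 1) / (1 - r) / ((1 - (r ^ n + 2 / (n * (1 - r) ^ 2))) / (1 - r)) := by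
        gcongr
        exact sum_sawWeight_Ico_le h0 h1 _ n
    _ = r ^ (⌊x⌋₊ + 1) / (1 - (r ^ n + 2 / (n * (1 - r) ^ 2))) := by
        rw [div_div_div_cancel_right₀ h1r.ne']

lemma tendsto_sawTail_of_geometric {r x : ℕ → ℝ} {L : ℝ}
    (hr : ∀ᶠ n in atTop, 0 ≤ r n ∧ r n < 1) (hx : ∀ n, 0 ≤ x n)
    (hL : Tendsto (fun n => r n ^ (⌊x n⌋₊ + 1)) atTop (𝓝 L))
    (hpow : Tendsto (fun n => r n ^ n) atTop (𝓝 0))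
    (hgap : Tendsto (fun n : ℕ => n * (1 - r n) ^ 2) atTop atTop) :
    Tendsto (fun n => sawTail n (r n) (x n)) atTop (𝓝 L) := by
  have hδ : Tendsto (fun n : ℕ => r n ^ n + 2 / (n * (1 - r n) ^ 2)) atTop (𝓝 0) := by
    simpa using hpow.add (hgap.const_div_atTop 2)
  have hlower := hL.sub hδ
  have hupper := hL.div ((tendsto_const_nhds (x := (1 : ℝ))).sub hδ) (by norm_num)
  rw [sub_zero] at hlower
  rw [sub_zero, div_one] at hupper
  refine tendsto_of_tendsto_of_tendsto_of_le_of_le' hlower hupper ?_ ?_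
  · filter_upwards [hr, eventually_gt_atTop 0] with n ⟨h0, h1⟩ hn
    exact pow_sub_le_sawTail h0 h1 hn (hx n)
  · filter_upwards [hr, hδ.eventually (gt_mem_nhds one_pos)] with n ⟨h0, h1⟩ hδn
    exact sawTail_le_pow_div h0 h1 (hx n) hδn

lemma tendsto_one_add_pow_exp {ι : Type*} {l : Filter ι} {s : ι → ℝ} {m : ι → ℕ} {y : ℝ}
    (hs : Tendsto s l (𝓝 0)) (hms : Tendsto (fun i => (m i : ℝ) * s i) l (𝓝 y)) :
    Tendsto (fun i => (1 + s i) ^ m i) l (𝓝 (exp y)) := by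
  have hpos : ∀ᶠ i in l, 0 < 1 + s i := by
    filter_upwards [hs.eventually (lt_mem_nhds neg_one_lt_zero)] with i hi
    linarith
  have hone : Tendsto (fun i => 1 + s i) l (𝓝 1) := by simpa using hs.const_add 1
  have hlog : Tendsto (fun i => (m i : ℝ) * log (1 + s i)) l (𝓝 y) := by
    refine tendsto_of_tendsto_of_tendsto_of_le_of_le' (by simpa using hms.div hone one_ne_zero)
      hms ?_ ?_
    · filter_upwards [hpos] with i hi
      calc (m i : ℝ) * s i / (1 + s i) = m i * (1 - (1 + s i)⁻¹) := by field_simp; ring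
        _ ≤ m i * log (1 + s i) := by gcongr; exact one_sub_inv_le_log_of_pos hi
    · filter_upwards [hpos] with i hi
      gcongr
      linarith [log_le_sub_one_of_pos hi]
  refine ((continuous_exp.tendsto y).comp hlog).congr' ?_
  filter_upwards [hpos] with i hi
  rw [Function.comp_apply, ← log_pow, exp_log (pow_pos hi _)]

lemma tendsto_floor_add_one_mul {ι : Type*} {l : Filter ι} {x s : ι → ℝ} {y : ℝ}
    (hx : ∀ i, 0 ≤ x i) (hs : Tendsto s l (𝓝 0)) (hs0 : ∀ᶠ i in l, 0 ≤ s i)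
    (hxs : Tendsto (fun i => x i * s i) l (𝓝 y)) :
    Tendsto (fun i => ((⌊x i⌋₊ + 1 : ℕ) : ℝ) * s i) l (𝓝 y) := by
  refine tendsto_of_tendsto_of_tendsto_of_le_of_le' hxs (by simpa using hxs.add hs) ?_ ?_
  · filter_upwards [hs0] with i hi
    gcongr
    push_cast
    exact (Nat.lt_floor_add_one _).le
  · filter_upwards [hs0] with i hi
    rw [← add_one_mul]
    gcongr
    push_cast
    linarith [Nat.floor_le (hx i)]

lemma tendsto_sawTail_exp {s x : ℕ → ℝ} {y : ℝ} (hs : Tendsto s atTop (𝓝 0))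
    (hs0 : ∀ᶠ n in atTop, 0 < s n) (hgap : Tendsto (fun n : ℕ => n * s n ^ 2) atTop atTop)
    (hx : ∀ n, 0 ≤ x n) (hxs : Tendsto (fun n => x n * s n) atTop (𝓝 y)) :
    Tendsto (fun n => sawTail n (1 / (1 + s n)) (x n)) atTop (𝓝 (exp (-y))) := by
  have hinv (m : ℕ) (n : ℕ) : (1 / (1 + s n)) ^ m = ((1 + s n) ^ m)⁻¹ := by
    rw [one_div, inv_pow]
  have hns : Tendsto (fun n : ℕ => n * s n) atTop atTop := by
    refine tendsto_atTop_mono' _ ?_ hgap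
    filter_upwards [hs0, hs.eventually (ge_mem_nhds one_pos)] with n hpos hle
    rw [sq, ← mul_assoc]
    exact mul_le_of_le_one_right (by positivity) hle
  refine tendsto_sawTail_of_geometric ?_ hx ?_ ?_ ?_
  · filter_upwards [hs0] with n hn
    exact ⟨by positivity, (div_lt_one (by linarith)).2 (by linarith)⟩
  · simp only [hinv, exp_neg]
    exact (tendsto_one_add_pow_exp hs
      (tendsto_floor_add_one_mul hx hs (hs0.mono fun n => le_of_lt) hxs)).inv₀ (exp_ne_zero y)
  · simp only [hinv]
    refine (tendsto_atTop_mono' _ ?_ (tendsto_atTop_add_const_left _ 1 hns)).inv_tendsto_atTop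
    filter_upwards [hs0] with n hn
    exact one_add_mul_le_pow (by linarith) n
  · have hr : Tendsto (fun n => (1 / (1 + s n)) ^ 2) atTop (𝓝 1) := by
      simpa using ((hs.const_add 1).inv₀ (by norm_num)).pow 2
    refine (hgap.atTop_mul_pos one_pos hr).congr' ?_
    filter_upwards [hs0] with n hn
    field_simp
    ring

theorem high_temp_window_exponential (α β : ℝ) (hα : 0 < α) (hβ1 : 0 < β) (hβ2 : β < 1 / 2)
    (y : ℝ) (hy : 0 ≤ y) :
    Tendsto (fun n : ℕ => sawTail n (1 / (1 + α * (n : ℝ) ^ (-β))) (y * (n : ℝ) ^ β / α))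
      atTop (nhds (Real.exp (-y))) := by
  refine tendsto_sawTail_exp ?_ ?_ ?_ (fun n => by positivity) ?_
  · simpa using ((tendsto_rpow_neg_atTop hβ1).comp tendsto_natCast_atTop_atTop).const_mul α
  · filter_upwards [eventually_gt_atTop 0] with n hn
    positivity
  · have hgrowth : Tendsto (fun n : ℕ => (n : ℝ) ^ (1 - 2 * β)) atTop atTop :=
      (tendsto_rpow_atTop (by linarith)).comp tendsto_natCast_atTop_atTop
    refine (hgrowth.const_mul_atTop (pow_pos hα 2)).congr' ?_
    filter_upwards [eventually_gt_atTop 0] with n hn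
    have hn' : (0 : ℝ) < n := Nat.cast_pos.2 hn
    rw [mul_pow, ← rpow_natCast ((n : ℝ) ^ (-β)), ← rpow_mul hn'.le, mul_left_comm,
      ← rpow_one_add' hn'.le (by push_cast; linarith)]
    ring_nf
  · refine tendsto_const_nhds.congr' ?_
    filter_upwards [eventually_gt_atTop 0] with n hn
    have hn' : (0 : ℝ) < n := Nat.cast_pos.2 hn
    rw [rpow_neg hn'.le]
    field_simp
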